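/- arXiv:math/0405513 — 2 statements merged into one kernel-verified Lean document; each statement's English description precedes it below -/
import Mathlib

section
/- Let f be smooth, nowhere zero on Ω, and a solution of the CP^{N−1} Euler–Lagrange equations, and let P := 1 − (1/(f†f)) f f†. Then the real-valued functions J_L := ((∂_L f)† P ∂_L f)/(f†f) and J_R := ((∂_R f)† P ∂_R f)/(f†f) satisfy ∂_L J_R = 0 and ∂_R J_L = 0 on Ω. -/
open Matrix

noncomputable section

attribute [local instance] Matrix.normedAddCommGroup Matrix.normedSpace

/-- Vectors in ℂ^N. -/
abbrev Vec (N : ℕ) := Fin N → ℂ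

/-- Hermitian inner product v† w. -/
def hermIP {N : ℕ} (v w : Vec N) : ℂ := dotProduct (star v) w

/-- The matrix v w†. -/
def outerM {N : ℕ} (v w : Vec N) : Matrix (Fin N) (Fin N) ℂ := vecMulVec v (star w)

/-- The projector P = 1 − (1/(f†f)) f f†. -/
def projM {N : ℕ} (f : Vec N) : Matrix (Fin N) (Fin N) ℂ :=
  1 - (1 / hermIP f f) • outerM f f

/-- Matrix commutator [A,B] = AB − BA. -/
def mcomm {N : ℕ} (A B : Matrix (Fin N) (Fin N) ℂ) : Matrix (Fin N) (Fin N) ℂ :=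
  A * B - B * A

/-- Light-cone direction ξ_L. -/
def dL : ℝ × ℝ := (1, 0)

/-- Light-cone direction ξ_R. -/
def dR : ℝ × ℝ := (0, 1)

/-- Directional (partial) derivative in direction `v`. -/
def pdv {E : Type*} [NormedAddCommGroup E] [NormedSpace ℝ E]
    (v : ℝ × ℝ) (g : ℝ × ℝ → E) (p : ℝ × ℝ) : E := fderiv ℝ g p v

/-- The CP^{N−1} Euler–Lagrange equation
P·(∂_L∂_R f − (1/(f†f))((f†∂_Rf)∂_Lf + (f†∂_Lf)∂_Rf)) = 0 at a point. -/
def EL {N : ℕ} (f : ℝ × ℝ → Vec N) (p : ℝ × ℝ) : Prop :=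
  projM (f p) *ᵥ (pdv dL (fun q => pdv dR f q) p
    - (1 / hermIP (f p) (f p)) • (hermIP (f p) (pdv dR f p) • pdv dL f p
      + hermIP (f p) (pdv dL f p) • pdv dR f p)) = 0

lemma hermIP_def {N : ℕ} (v w : Vec N) : hermIP v w = ∑ i, star (v i) * w i := rfl
lemma star_hermIP {N : ℕ} (v w : Vec N) : star (hermIP v w) = hermIP w v := by
  simp [hermIP_def, mul_comm]

lemma hermIP_smul_right {N : ℕ} (v w : Vec N) (z : ℂ) :
    hermIP v (z • w) = z * hermIP v w := by
  simp only [hermIP_def, Finset.mul_sum, Pi.smul_apply, smul_eq_mul]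
  exact Finset.sum_congr rfl fun i _ => by ring

lemma hermIP_add_right {N : ℕ} (v w₁ w₂ : Vec N) :
    hermIP v (w₁ + w₂) = hermIP v w₁ + hermIP v w₂ := by
  simp [hermIP_def, mul_add, Finset.sum_add_distrib]

lemma hermIP_sub_right {N : ℕ} (v w₁ w₂ : Vec N) :
    hermIP v (w₁ - w₂) = hermIP v w₁ - hermIP v w₂ := by
  simp [hermIP_def, mul_sub, Finset.sum_sub_distrib]

lemma hermIP_self_ne_zero {N : ℕ} {v : Vec N} (hv : v ≠ 0) : hermIP v v ≠ 0 := by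
  have h : hermIP v v = ((∑ i, Complex.normSq (v i) : ℝ) : ℂ) := by
    rw [hermIP_def]
    push_cast
    exact Finset.sum_congr rfl fun i _ => (Complex.normSq_eq_conj_mul_self (z := v i)).symm
  rw [h]
  have : 0 < ∑ i, Complex.normSq (v i) := by
    obtain ⟨i, hi⟩ := Function.ne_iff.mp hv
    exact Finset.sum_pos' (fun j _ => Complex.normSq_nonneg _)
      ⟨i, Finset.mem_univ i, by simpa using Complex.normSq_pos.mpr hi⟩
  exact_mod_cast this.ne'

lemma outerM_mulVec {N : ℕ} (v w x : Vec N) :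
    outerM v w *ᵥ x = (hermIP w x) • v := by
  funext i
  simp only [outerM, vecMulVec, mulVec, dotProduct, of_apply, hermIP_def, Pi.smul_apply,
    Pi.star_apply, smul_eq_mul]
  rw [Finset.sum_mul]
  exact Finset.sum_congr rfl fun j _ => by ring

lemma projM_mulVec {N : ℕ} (v x : Vec N) :
    projM v *ᵥ x = x - ((1 / hermIP v v) * hermIP v x) • v := by
  rw [projM, sub_mulVec, one_mulVec, smul_mulVec, outerM_mulVec, smul_smul]

lemma herm_proj {N : ℕ} (v g : Vec N) :
    hermIP g (projM v *ᵥ g)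
      = hermIP g g - hermIP v g * star (hermIP v g) * (hermIP v v)⁻¹ := by
  rw [projM_mulVec, hermIP_sub_right, hermIP_smul_right, ← star_hermIP v g]
  ring

lemma hermBB (N : ℕ) : IsBoundedBilinearMap ℝ (fun p : Vec N × Vec N => hermIP p.1 p.2) where
  add_left x₁ x₂ y := by
    simp only [hermIP_def, Pi.add_apply, star_add, add_mul, Finset.sum_add_distrib]
  smul_left c x y := by
    simp only [hermIP_def, Pi.smul_apply, star_smul, star_trivial, Complex.real_smul,
      Complex.ofReal_mul, smul_eq_mul, Finset.mul_sum]
    exact Finset.sum_congr rfl fun i _ => by simp [Complex.real_smul]; ring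
  add_right x y₁ y₂ := by
    simp only [hermIP_def, Pi.add_apply, mul_add, Finset.sum_add_distrib]
  smul_right c x y := by
    simp only [hermIP_def, Pi.smul_apply, Complex.real_smul, smul_eq_mul, Finset.mul_sum]
    exact Finset.sum_congr rfl fun i _ => by simp [Complex.real_smul]; ring
  bound := by
    refine ⟨N + 1, by positivity, fun x y => ?_⟩
    have h0 : ‖hermIP x y‖ ≤ ∑ i : Fin N, ‖star (x i) * y i‖ := by
      rw [hermIP_def]; exact norm_sum_le _ _
    calc ‖hermIP x y‖ ≤ ∑ i : Fin N, ‖star (x i) * y i‖ := h0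
    _ ≤ ∑ i : Fin N, ‖x‖ * ‖y‖ := by
        refine Finset.sum_le_sum fun i _ => ?_
        calc ‖star (x i) * y i‖ ≤ ‖star (x i)‖ * ‖y i‖ := norm_mul_le _ _
        _ = ‖x i‖ * ‖y i‖ := by rw [norm_star]
        _ ≤ ‖x‖ * ‖y‖ := by
            gcongr
            · exact norm_le_pi_norm x i
            · exact norm_le_pi_norm y i
    _ = (N : ℝ) * (‖x‖ * ‖y‖) := by simp
    _ ≤ (N + 1 : ℝ) * (‖x‖ * ‖y‖) := by
      have : (N : ℝ) ≤ (N + 1 : ℝ) := by linarith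
      have hxy : (0:ℝ) ≤ ‖x‖ * ‖y‖ := by positivity
      nlinarith [mul_le_mul_of_nonneg_right this hxy]
    _ = (N + 1 : ℝ) * ‖x‖ * ‖y‖ := by ring

lemma hasFDerivAt_herm {N : ℕ} {u v : ℝ × ℝ → Vec N} {u' v' : (ℝ × ℝ) →L[ℝ] Vec N}
    {p : ℝ × ℝ} (hu : HasFDerivAt u u' p) (hv : HasFDerivAt v v' p) :
    HasFDerivAt (fun q => hermIP (u q) (v q))
      (((hermBB N).deriv (u p, v p)).comp (u'.prod v')) p :=
  by have := ((hermBB N).hasFDerivAt (u p, v p)).comp p (hu.prodMk hv); exact this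

example {N : ℕ} {u v : ℝ × ℝ → Vec N} {u' v' : (ℝ × ℝ) →L[ℝ] Vec N}
    {p t : ℝ × ℝ} :
    (((hermBB N).deriv (u p, v p)).comp (u'.prod v')) t
      = hermIP (u p) (v' t) + hermIP (u' t) (v p) := by
  simp [IsBoundedBilinearMap.deriv_apply]

lemma hermIP_smul_left {N : ℕ} (v w : Vec N) (z : ℂ) :
    hermIP (z • v) w = star z * hermIP v w := by
  simp only [hermIP_def, Pi.smul_apply, smul_eq_mul, star_mul', Finset.mul_sum]
  exact Finset.sum_congr rfl fun i _ => by ring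

lemma hermIP_add_left {N : ℕ} (v₁ v₂ w : Vec N) :
    hermIP (v₁ + v₂) w = hermIP v₁ w + hermIP v₂ w := by
  simp only [hermIP_def, Pi.add_apply, star_add, add_mul, Finset.sum_add_distrib]

@[simp] lemma starL'_app (z : ℂ) : ((starL' ℝ : ℂ ≃L[ℝ] ℂ) : ℂ →L[ℝ] ℂ) z = star z := rfl
@[simp] lemma starL'_app' (z : ℂ) : (starL' ℝ : ℂ ≃L[ℝ] ℂ) z = star z := rfl

lemma key {N : ℕ} {f : ℝ × ℝ → Vec N} {p u w : ℝ × ℝ}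
    (hf : ContDiffAt ℝ (⊤ : ℕ∞) f p) (hfz : f p ≠ 0)
    (hK : projM (f p) *ᵥ (fderiv ℝ (fun q => fderiv ℝ f q w) p u
      - (1 / hermIP (f p) (f p)) • (hermIP (f p) (fderiv ℝ f p w) • fderiv ℝ f p u
        + hermIP (f p) (fderiv ℝ f p u) • fderiv ℝ f p w)) = 0) :
    fderiv ℝ (fun q =>
      ((hermIP (fderiv ℝ f q w) (projM (f q) *ᵥ fderiv ℝ f q w)) / hermIP (f q) (f q)).re) p u
      = 0 := by
  have hF : HasFDerivAt f (fderiv ℝ f p) p := (hf.differentiableAt (by simp)).hasFDerivAt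
  have hGc : ContDiffAt ℝ (⊤ : ℕ∞) (fun q => fderiv ℝ f q w) p :=
    (hf.fderiv_right (by simp)).clm_apply contDiffAt_const
  have hG : HasFDerivAt (fun q => fderiv ℝ f q w)
      (fderiv ℝ (fun q => fderiv ℝ f q w) p) p := (hGc.differentiableAt (by simp)).hasFDerivAt
  have ha := hasFDerivAt_herm hF hF
  have hb := hasFDerivAt_herm hF hG
  have hc := hasFDerivAt_herm hG hG
  have hbs := hb.star
  have ha0 : hermIP (f p) (f p) ≠ 0 := hermIP_self_ne_zero hfz
  have hinv := (hasFDerivAt_inv' (𝕜 := ℝ) (R := ℂ) ha0).comp p ha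
  have hJ := (Complex.reCLM.hasFDerivAt (x := (hermIP ((fun q => fderiv ℝ f q w) p)
      ((fun q => fderiv ℝ f q w) p) - _ * _) * _)).comp p
    ((hc.sub ((hb.mul hbs).mul hinv)).mul hinv)
  have hev : (fun q =>
      ((hermIP (fderiv ℝ f q w) (projM (f q) *ᵥ fderiv ℝ f q w)) / hermIP (f q) (f q)).re)
      =ᶠ[nhds p] (fun q => Complex.reCLM ((hermIP (fderiv ℝ f q w) (fderiv ℝ f q w)
        - hermIP (f q) (fderiv ℝ f q w) * star (hermIP (f q) (fderiv ℝ f q w))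
          * (hermIP (f q) (f q))⁻¹) * (hermIP (f q) (f q))⁻¹)) := by
    filter_upwards with q
    rw [herm_proj]
    simp [div_eq_mul_inv]
  have hJ2 := hJ.congr_of_eventuallyEq hev
  rw [hJ2.fderiv]
  simp only [ContinuousLinearMap.coe_comp', Function.comp_apply,
    ContinuousLinearMap.add_apply, ContinuousLinearMap.coe_smul', Pi.smul_apply,
    ContinuousLinearMap.smul_apply, ContinuousLinearMap.coe_sub', Pi.sub_apply,
    ContinuousLinearMap.sub_apply, ContinuousLinearMap.prod_apply,
    ContinuousLinearMap.neg_apply, ContinuousLinearMap.mulLeftRight_apply,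
    IsBoundedBilinearMap.deriv_apply, smul_eq_mul, starL'_app,
    ContinuousLinearEquiv.coe_coe, Complex.reCLM_apply, starL'_app', starL'_app]
  rw [projM_mulVec] at hK
  obtain ⟨μ, hk⟩ : ∃ μ : ℂ, fderiv ℝ (fun q => fderiv ℝ f q w) p u
      = μ • f p + (1 / hermIP (f p) (f p)) • (hermIP (f p) (fderiv ℝ f p w) • fderiv ℝ f p u
        + hermIP (f p) (fderiv ℝ f p u) • fderiv ℝ f p w) :=
    ⟨_, sub_eq_iff_eq_add.mp (sub_eq_zero.mp hK)⟩
  rw [hk]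
  simp only [hermIP_add_left, hermIP_add_right, hermIP_smul_left, hermIP_smul_right,
    star_hermIP, star_add, StarMul.star_mul, star_star, star_one, star_inv₀, star_div₀,
    Pi.mul_apply, Function.comp_apply]
  have h0 : ∀ z : ℂ, z = 0 → z.re = 0 := fun z hz => by simp [hz]
  apply h0
  field_simp
  ring


theorem stmt4 {N : ℕ} (hN : 2 ≤ N) (Ω : Set (ℝ × ℝ)) (hΩ : IsOpen Ω)
    (f : ℝ × ℝ → Vec N) (hf : ContDiffOn ℝ (⊤ : ℕ∞) f Ω) (hfz : ∀ p ∈ Ω, f p ≠ 0)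
    (hEL : ∀ p ∈ Ω, EL f p) :
    ∀ p ∈ Ω,
      pdv dL (fun q =>
        ((hermIP (pdv dR f q) (projM (f q) *ᵥ pdv dR f q)) / hermIP (f q) (f q)).re) p = 0 ∧
      pdv dR (fun q =>
        ((hermIP (pdv dL f q) (projM (f q) *ᵥ pdv dL f q)) / hermIP (f q) (f q)).re) p = 0 := by

  intro p hp
  have hfa : ContDiffAt ℝ (⊤ : ℕ∞) f p := hf.contDiffAt (hΩ.mem_nhds hp)
  have hfz' : f p ≠ 0 := hfz p hp
  have hK1 := hEL p hp
  simp only [EL, pdv] at hK1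
  have h2d : DifferentiableAt ℝ (fderiv ℝ f) p :=
    (hfa.fderiv_right (m := 1) (by exact WithTop.coe_le_coe.mpr le_top)).differentiableAt one_ne_zero
  have happ : ∀ v : ℝ × ℝ, fderiv ℝ (fun q => fderiv ℝ f q v) p
      = (ContinuousLinearMap.apply ℝ (Vec N) v).comp (fderiv ℝ (fderiv ℝ f) p) := fun v =>
    (((ContinuousLinearMap.apply ℝ (Vec N) v).hasFDerivAt).comp p h2d.hasFDerivAt).fderiv
  have hsymm : IsSymmSndFDerivAt ℝ f p := hfa.isSymmSndFDerivAt (by rw [minSmoothness_of_isRCLikeNormedField]; exact WithTop.coe_le_coe.mpr (le_top : (2 : ℕ∞) ≤ ⊤))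
  have hswap : fderiv ℝ (fun q => fderiv ℝ f q dL) p dR
      = fderiv ℝ (fun q => fderiv ℝ f q dR) p dL := by
    rw [happ dL, happ dR]
    simpa using hsymm dR dL
  constructor
  · simpa [pdv] using key (u := dL) (w := dR) hfa hfz' hK1
  · have hK2 : projM (f p) *ᵥ (fderiv ℝ (fun q => fderiv ℝ f q dL) p dR
        - (1 / hermIP (f p) (f p)) • (hermIP (f p) (fderiv ℝ f p dL) • fderiv ℝ f p dR
          + hermIP (f p) (fderiv ℝ f p dR) • fderiv ℝ f p dL)) = 0 := by
      rw [hswap, add_comm]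
      exact hK1
    simpa [pdv] using key (u := dR) (w := dL) hfa hfz' hK2
end
end

section
/- Let f be continuously differentiable and nowhere zero on Ω and let P := 1 − (1/(f†f)) f f†. Then the tangent vectors X_L := [∂_L P, P] and X_R := −[∂_R P, P] satisfy, with respect to the scalar product (A, B) = −½ tr(AB): (X_L, X_L) = J_L, (X_R, X_R) = J_R, and (X_L, X_R) = −Re((∂_R f)† P (∂_L f))/(f†f). Hence the induced metric of the surface has components G_LL = J_L, G_RR = J_R, G_LR = −Re((∂_R f)† P (∂_L f)/(f†f)). -/
open Matrix

noncomputable section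

attribute [local instance] Matrix.normedAddCommGroup Matrix.normedSpace

/-!
Write `P = projM f`, `a = ∂f` and `A = ∂P` for a derivative in one direction. Differentiating
`P² = P`, `P f = 0` and `f† P = 0` gives `A = A P + P A` and pins `A` down as
`A = -(f (P a)† + (P a) f†) / (f† f)`. From `A = A P + P A` one gets `P A P = 0`, and cyclicity of
the trace then gives `tr ([A, P] [B, P]) = -tr (A B)`. The trace of the product of two such
rank-two matrices is `(a† P b + b† P a) / (f† f)`, and `a† P b` is the complex conjugate of
`b† P a`.
-/

section BilinearCalculus

variable {𝕜 : Type*} [NontriviallyNormedField 𝕜] [CompleteSpace 𝕜]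
  {X : Type*} [NormedAddCommGroup X] [NormedSpace 𝕜 X]
  {E : Type*} [NormedAddCommGroup E] [NormedSpace 𝕜 E] [FiniteDimensional 𝕜 E]
  {F : Type*} [NormedAddCommGroup F] [NormedSpace 𝕜 F] [FiniteDimensional 𝕜 F]
  {G : Type*} [NormedAddCommGroup G] [NormedSpace 𝕜 G]
  {b : E → F → G} {u : X → E} {v : X → F} {x : X}

theorem IsBilinearMap.differentiableAt_comp (hb : IsBilinearMap 𝕜 b)
    (hu : DifferentiableAt 𝕜 u x) (hv : DifferentiableAt 𝕜 v x) :
    DifferentiableAt 𝕜 (fun y => b (u y) (v y)) x :=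
  (hb.toContinuousBilinearMap.hasFDerivAt_of_bilinear hu.hasFDerivAt hv.hasFDerivAt).differentiableAt

theorem IsBilinearMap.fderiv_comp_apply (hb : IsBilinearMap 𝕜 b)
    (hu : DifferentiableAt 𝕜 u x) (hv : DifferentiableAt 𝕜 v x) (w : X) :
    fderiv 𝕜 (fun y => b (u y) (v y)) x w = b (fderiv 𝕜 u x w) (v x) + b (u x) (fderiv 𝕜 v x w) := by
  have h : HasFDerivAt (fun y => b (u y) (v y)) _ x :=
    hb.toContinuousBilinearMap.hasFDerivAt_of_bilinear hu.hasFDerivAt hv.hasFDerivAt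
  rw [h.fderiv]
  simp [add_comm]

end BilinearCalculus

namespace IsIdempotentElem

variable {R : Type*} [Ring R] {P A : R}

theorem mul_mul_eq_zero_of_mul_add_mul_eq (hP : IsIdempotentElem P) (hA : A * P + P * A = A) :
    P * A * P = 0 := by
  have h := congrArg (fun X => P * X * P) hA
  simp only [mul_add, add_mul, mul_assoc, hP.eq] at h
  simp only [← mul_assoc, hP.eq] at h
  simpa [mul_assoc] using h

theorem eq_add_of_mul_add_mul_eq (hP : IsIdempotentElem P) (hA : A * P + P * A = A) :
    A = (1 - P) * A * P + P * A * (1 - P) := by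
  calc A = A * P + P * A := hA.symm
    _ = (1 - P) * A * P + P * A * (1 - P) + 2 * (P * A * P) := by noncomm_ring
    _ = _ := by rw [hP.mul_mul_eq_zero_of_mul_add_mul_eq hA, mul_zero, add_zero]

end IsIdempotentElem

theorem Matrix.trace_commutator_mul_commutator {n R : Type*} [Fintype n] [CommRing R]
    {P A : Matrix n n R} (hP : IsIdempotentElem P) (hA : A * P + P * A = A)
    (B : Matrix n n R) :
    trace ((A * P - P * A) * (B * P - P * B)) = -trace (A * B) := by
  classical
  have hPAP : P * A * P = 0 := hP.mul_mul_eq_zero_of_mul_add_mul_eq hA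
  have h1 : trace (A * P * (B * P)) = 0 := by
    rw [← Matrix.mul_assoc, trace_mul_comm, ← Matrix.mul_assoc, ← Matrix.mul_assoc, hPAP,
      Matrix.zero_mul, trace_zero]
  have h2 : trace (P * A * (P * B)) = 0 := by
    rw [← Matrix.mul_assoc, hPAP, Matrix.zero_mul, trace_zero]
  have h3 : trace (P * A * (B * P)) = trace (P * A * B) := by
    rw [← Matrix.mul_assoc, trace_mul_comm, ← Matrix.mul_assoc, ← Matrix.mul_assoc, hP.eq]
  calc trace ((A * P - P * A) * (B * P - P * B))
      = trace (A * P * (B * P)) - trace (A * P * (P * B)) - trace (P * A * (B * P))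
          + trace (P * A * (P * B)) := by
        simp only [Matrix.sub_mul, Matrix.mul_sub, trace_sub]; ring
    _ = -trace ((A * P + P * A) * B) := by
        rw [h1, h2, h3, Matrix.add_mul, trace_add, ← Matrix.mul_assoc, Matrix.mul_assoc A P P,
          hP.eq]
        ring
    _ = -trace (A * B) := by rw [hA]

section Projector

variable {N : ℕ}

open scoped ComplexOrder in
theorem hermIP_self_eq_zero {g : Vec N} : hermIP g g = 0 ↔ g = 0 :=
  dotProduct_star_self_eq_zero

theorem conj_hermIP (v w : Vec N) : starRingEnd ℂ (hermIP v w) = hermIP w v := by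
  change star (star v ⬝ᵥ w) = star w ⬝ᵥ v
  rw [star_dotProduct, star_star, dotProduct_comm]

theorem trace_outerM (v w : Vec N) : trace (outerM v w) = hermIP w v := by
  rw [outerM, trace_vecMulVec, dotProduct_comm, hermIP]

theorem outerM_mul_outerM (a b c d : Vec N) :
    outerM a b * outerM c d = hermIP b c • outerM a d := by
  rw [outerM, outerM, vecMulVec_mul_vecMulVec, vecMulVec_smul, hermIP]
  rfl

theorem trace_outerM_add_mul {g u v : Vec N} (hu : hermIP g u = 0) (hv : hermIP g v = 0) :
    trace ((outerM g u + outerM u g) * (outerM g v + outerM v g))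
      = hermIP g g * (hermIP u v + hermIP v u) := by
  have hu' : hermIP u g = 0 := by rw [← conj_hermIP, hu, map_zero]
  simp only [Matrix.add_mul, Matrix.mul_add, outerM_mul_outerM, trace_add, trace_smul,
    trace_outerM, smul_eq_mul, hu', hv]
  ring

theorem one_sub_projM (g : Vec N) : 1 - projM g = (1 / hermIP g g) • outerM g g := by
  rw [projM, sub_sub_cancel]

theorem isHermitian_projM (g : Vec N) : (projM g).IsHermitian := by
  have hρ : star (hermIP g g) = hermIP g g := conj_hermIP g g
  simp [IsHermitian, projM, outerM, conjTranspose_smul, conjTranspose_vecMulVec, hρ]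

theorem isIdempotentElem_projM (g : Vec N) : IsIdempotentElem (projM g) := by
  have hQ : IsIdempotentElem ((1 / hermIP g g) • outerM g g) := by
    rw [IsIdempotentElem, smul_mul_smul, outerM_mul_outerM, smul_smul]
    rcases eq_or_ne (hermIP g g) 0 with h | h
    · simp [h]
    · congr 1; field_simp
  rw [← one_sub_projM] at hQ
  exact IsIdempotentElem.one_sub_iff.mp hQ

theorem projM_mulVec_self (g : Vec N) : projM g *ᵥ g = 0 := by
  rcases eq_or_ne g 0 with rfl | hg
  · exact mulVec_zero _
  · rw [projM, sub_mulVec, one_mulVec, smul_mulVec, outerM, vecMulVec_mulVec, op_smul_eq_smul,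
      smul_smul, ← hermIP, one_div_mul_cancel (hermIP_self_eq_zero.not.mpr hg), one_smul, sub_self]

theorem star_vecMul_projM (g : Vec N) : star g ᵥ* projM g = 0 := by
  rw [← (isHermitian_projM g).eq, ← star_mulVec, projM_mulVec_self, star_zero]

theorem hermIP_projM_mulVec_left (g u v : Vec N) :
    hermIP (projM g *ᵥ u) v = hermIP u (projM g *ᵥ v) := by
  rw [hermIP, hermIP, star_mulVec, (isHermitian_projM g).eq, dotProduct_mulVec]

theorem hermIP_projM_mulVec_projM_mulVec (g u v : Vec N) :
    hermIP (projM g *ᵥ u) (projM g *ᵥ v) = hermIP u (projM g *ᵥ v) := by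
  rw [hermIP_projM_mulVec_left, mulVec_mulVec, (isIdempotentElem_projM g).eq]

theorem hermIP_self_projM_mulVec (g u : Vec N) : hermIP g (projM g *ᵥ u) = 0 := by
  rw [hermIP, dotProduct_mulVec, star_vecMul_projM, zero_dotProduct]

theorem eq_outerM_of_projM_tangent {g a : Vec N} {A : Matrix (Fin N) (Fin N) ℂ}
    (hA : A * projM g + projM g * A = A) (hAg : A *ᵥ g + projM g *ᵥ a = 0)
    (hgA : star a ᵥ* projM g + star g ᵥ* A = 0) :
    A = -(1 / hermIP g g) • (outerM g (projM g *ᵥ a) + outerM (projM g *ᵥ a) g) := by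
  set P := projM g
  have hP : P * P = P := (isIdempotentElem_projM g).eq
  have hPh : Pᴴ = P := (isHermitian_projM g).eq
  have hright : (1 / hermIP g g) • outerM g g * A * P = -(1 / hermIP g g) • outerM g (P *ᵥ a) := by
    rw [smul_mul_assoc, smul_mul_assoc, outerM, vecMulVec_mul, vecMulVec_mul,
      eq_neg_of_add_eq_zero_right hgA, neg_vecMul, vecMul_vecMul, hP, outerM, star_mulVec, hPh,
      vecMulVec_neg, smul_neg, neg_smul]
  have hleft : P * A * ((1 / hermIP g g) • outerM g g) = -(1 / hermIP g g) • outerM (P *ᵥ a) g := by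
    rw [mul_smul_comm, outerM, mul_vecMulVec, ← mulVec_mulVec,
      eq_neg_of_add_eq_zero_left hAg, mulVec_neg, mulVec_mulVec, hP, neg_vecMulVec, smul_neg,
      neg_smul, outerM]
  calc A = (1 - P) * A * P + P * A * (1 - P) :=
        (isIdempotentElem_projM g).eq_add_of_mul_add_mul_eq hA
    _ = _ := by rw [one_sub_projM, hright, hleft, smul_add]

end Projector

section Derivatives

variable {N : ℕ}

theorem isBilinearMap_outerM : IsBilinearMap ℝ (outerM : Vec N → Vec N → _) := by
  constructor <;> intros <;> ext <;> simp [outerM, vecMulVec_apply] <;> ring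

theorem isBilinearMap_hermIP : IsBilinearMap ℝ (hermIP : Vec N → Vec N → ℂ) := by
  constructor <;> intros <;> simp [hermIP, dotProduct_add, add_dotProduct, star_add]

theorem isBilinearMap_matrix_mul :
    IsBilinearMap ℝ (fun A B : Matrix (Fin N) (Fin N) ℂ => A * B) := by
  constructor <;> intros <;> simp [add_mul, mul_add]

theorem isBilinearMap_mulVec :
    IsBilinearMap ℝ (fun (A : Matrix (Fin N) (Fin N) ℂ) (v : Vec N) => A *ᵥ v) := by
  constructor <;> intros <;> simp [add_mulVec, mulVec_add, mulVec_smul, smul_mulVec]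

theorem isBilinearMap_star_vecMul :
    IsBilinearMap ℝ (fun (v : Vec N) (A : Matrix (Fin N) (Fin N) ℂ) => star v ᵥ* A) := by
  constructor <;> intros <;> simp [add_vecMul, vecMul_add, vecMul_smul, smul_vecMul]

variable {f : ℝ × ℝ → Vec N} {p : ℝ × ℝ}

theorem differentiableAt_projM (hf : DifferentiableAt ℝ f p) (hp : f p ≠ 0) :
    DifferentiableAt ℝ (fun r => projM (f r)) p := by
  have hρ : DifferentiableAt ℝ (fun r => hermIP (f r) (f r)) p :=
    isBilinearMap_hermIP.differentiableAt_comp hf hf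
  simp only [projM, one_div]
  exact (differentiableAt_const 1).sub ((hρ.fun_inv (hermIP_self_eq_zero.not.mpr hp)).smul
    (isBilinearMap_outerM.differentiableAt_comp hf hf))

theorem pdv_projM_mul_add_mul (hf : DifferentiableAt ℝ f p) (hp : f p ≠ 0) (w : ℝ × ℝ) :
    pdv w (fun r => projM (f r)) p * projM (f p) + projM (f p) * pdv w (fun r => projM (f r)) p
      = pdv w (fun r => projM (f r)) p := by
  have hP := differentiableAt_projM hf hp
  have h := isBilinearMap_matrix_mul.fderiv_comp_apply hP hP w
  simp only [(isIdempotentElem_projM _).eq] at h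
  exact h.symm

theorem pdv_projM (hf : DifferentiableAt ℝ f p) (hp : f p ≠ 0) (w : ℝ × ℝ) :
    pdv w (fun r => projM (f r)) p = -(1 / hermIP (f p) (f p)) •
      (outerM (f p) (projM (f p) *ᵥ pdv w f p) + outerM (projM (f p) *ᵥ pdv w f p) (f p)) := by
  have hP := differentiableAt_projM hf hp
  apply eq_outerM_of_projM_tangent (pdv_projM_mul_add_mul hf hp w)
  · have h := isBilinearMap_mulVec.fderiv_comp_apply hP hf w
    simp only [projM_mulVec_self, fderiv_const_apply, _root_.zero_apply] at h
    exact h.symm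
  · have h := isBilinearMap_star_vecMul.fderiv_comp_apply hf hP w
    simp only [star_vecMul_projM, fderiv_const_apply, _root_.zero_apply] at h
    exact h.symm

theorem trace_mcomm_pdv_projM_mul (hf : DifferentiableAt ℝ f p) (hp : f p ≠ 0) (w w' : ℝ × ℝ) :
    trace (mcomm (pdv w (fun r => projM (f r)) p) (projM (f p))
        * mcomm (pdv w' (fun r => projM (f r)) p) (projM (f p)))
      = -((hermIP (pdv w f p) (projM (f p) *ᵥ pdv w' f p)
          + hermIP (pdv w' f p) (projM (f p) *ᵥ pdv w f p)) / hermIP (f p) (f p)) := by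
  have hρ : hermIP (f p) (f p) ≠ 0 := hermIP_self_eq_zero.not.mpr hp
  rw [mcomm, mcomm, trace_commutator_mul_commutator (isIdempotentElem_projM _)
    (pdv_projM_mul_add_mul hf hp w), pdv_projM hf hp w, pdv_projM hf hp w', smul_mul_smul,
    trace_smul, trace_outerM_add_mul (hermIP_self_projM_mulVec _ _) (hermIP_self_projM_mulVec _ _),
    hermIP_projM_mulVec_projM_mulVec, hermIP_projM_mulVec_projM_mulVec, smul_eq_mul]
  field_simp

end Derivatives

theorem stmt11_general {N : ℕ} (Ω : Set (ℝ × ℝ)) (hΩ : IsOpen Ω)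
    (f : ℝ × ℝ → Vec N) (hf : ContDiffOn ℝ 1 f Ω) (hfz : ∀ p ∈ Ω, f p ≠ 0)
    (XL XR : ℝ × ℝ → Matrix (Fin N) (Fin N) ℂ)
    (hXL : XL = fun p => mcomm (pdv dL (fun r => projM (f r)) p) (projM (f p)))
    (hXR : XR = fun p => - mcomm (pdv dR (fun r => projM (f r)) p) (projM (f p))) :
    ∀ p ∈ Ω,
      -(1 / 2 : ℂ) * (XL p * XL p).trace
          = hermIP (pdv dL f p) (projM (f p) *ᵥ pdv dL f p) / hermIP (f p) (f p) ∧
      -(1 / 2 : ℂ) * (XR p * XR p).trace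
          = hermIP (pdv dR f p) (projM (f p) *ᵥ pdv dR f p) / hermIP (f p) (f p) ∧
      -(1 / 2 : ℂ) * (XL p * XR p).trace
          = -(((hermIP (pdv dR f p) (projM (f p) *ᵥ pdv dL f p))
              / hermIP (f p) (f p)).re : ℂ) := by
  intro p hp
  have hd : DifferentiableAt ℝ f p :=
    ((hf p hp).contDiffAt (hΩ.mem_nhds hp)).differentiableAt one_ne_zero
  have htr := trace_mcomm_pdv_projM_mul hd (hfz p hp)
  subst hXL hXR
  refine ⟨?_, ?_, ?_⟩
  · rw [htr]; ring
  · rw [neg_mul_neg, htr]; ring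
  · rw [mul_neg, trace_neg, htr, Complex.re_eq_add_conj, map_div₀, conj_hermIP, conj_hermIP,
      hermIP_projM_mulVec_left]
    ring

theorem stmt11 {N : ℕ} (hN : 2 ≤ N) (Ω : Set (ℝ × ℝ)) (hΩ : IsOpen Ω)
    (f : ℝ × ℝ → Vec N) (hf : ContDiffOn ℝ 1 f Ω) (hfz : ∀ p ∈ Ω, f p ≠ 0)
    (XL XR : ℝ × ℝ → Matrix (Fin N) (Fin N) ℂ)
    (hXL : XL = fun p => mcomm (pdv dL (fun r => projM (f r)) p) (projM (f p)))
    (hXR : XR = fun p => - mcomm (pdv dR (fun r => projM (f r)) p) (projM (f p))) :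
    ∀ p ∈ Ω,
      -(1 / 2 : ℂ) * (XL p * XL p).trace
          = hermIP (pdv dL f p) (projM (f p) *ᵥ pdv dL f p) / hermIP (f p) (f p) ∧
      -(1 / 2 : ℂ) * (XR p * XR p).trace
          = hermIP (pdv dR f p) (projM (f p) *ᵥ pdv dR f p) / hermIP (f p) (f p) ∧
      -(1 / 2 : ℂ) * (XL p * XR p).trace
          = -(((hermIP (pdv dR f p) (projM (f p) *ᵥ pdv dL f p))
              / hermIP (f p) (f p)).re : ℂ) :=
  stmt11_general Ω hΩ f hf hfz XL XR hXL hXR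
end
end
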